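/- arXiv:2011.00706 — 2 statements merged into one kernel-verified Lean document; each statement's English description precedes it below -/
import Mathlib

section
/- Let π ∈ S_n, let p be a divisor of n, and suppose the difference sequence of π is periodic with a period dividing p. Then π(i) ≡ π(i+p) (mod p) for all i (indices read modulo n). -/
/-- The representative of `x : ZMod n` in `{1, …, n}` (so `0` represents `n`). -/
def repr1 (n : ℕ) (x : ZMod n) : ℕ := if x = 0 then n else x.val

/-- Values of `ZMod n`, embedded into `ZMod (n+1)` via representatives in `{1, …, n}`. -/
def emb (n : ℕ) (x : ZMod n) : ZMod (n + 1) := (repr1 n x : ZMod (n + 1))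

/-- `L 0 = 0` and `L i = π(i)` for `i ∈ {1,…,n}`: the listing used to build
the cycle `Y_π = (π(n) π(n−1) … π(1) 0)`. -/
def listFun (n : ℕ) (π : Equiv.Perm (ZMod n)) : ZMod (n + 1) → ZMod (n + 1) :=
  fun i => if i = 0 then 0 else emb n (π (i.val : ZMod n))

/-- The inverse listing of `listFun`. -/
def listInv (n : ℕ) (π : Equiv.Perm (ZMod n)) : ZMod (n + 1) → ZMod (n + 1) :=
  fun y => if y = 0 then 0 else emb n (π.symm (y.val : ZMod n))

/-- The cycle `Y_π = (π(n) π(n−1) … π(1) 0)` on `{0,1,…,n}`, as a function: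
it sends `L(i)` to `L(i-1)`. -/
def Yfun (n : ℕ) (π : Equiv.Perm (ZMod n)) : ZMod (n + 1) → ZMod (n + 1) :=
  fun y => listFun n π (listInv n π y - 1)

/-- `C_π = Y_π ∘ X_n`, where `X_n` is the cycle `(0 1 2 … n)`, i.e. `x ↦ x + 1`. -/
def Cfun (n : ℕ) (π : Equiv.Perm (ZMod n)) : ZMod (n + 1) → ZMod (n + 1) :=
  fun x => Yfun n π (x + 1)

/-- The strategic pile of `π ∈ S_n`: the set of values appearing strictly after `n` and
strictly before `0` on the cycle of `C_π` containing `0` and `n` (empty if `0` and `n`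
lie in different cycles). -/
def strategicPile (n : ℕ) (π : Equiv.Perm (ZMod n)) : Set (ZMod (n + 1)) :=
  {x | ∃ k m : ℕ, 0 < k ∧ k < m ∧ (Cfun n π)^[m] (n : ZMod (n + 1)) = 0 ∧
      (∀ j, 0 < j → j < m → (Cfun n π)^[j] (n : ZMod (n + 1)) ≠ 0) ∧
      (Cfun n π)^[k] (n : ZMod (n + 1)) = x}

/-- `π ∈ S_n` has maximal strategic pile. -/
def MaxPile (n : ℕ) (π : Equiv.Perm (ZMod n)) : Prop :=
  (Even n ∧ (strategicPile n π).ncard = n - 1) ∨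
  (Odd n ∧ (strategicPile n π).ncard = n - 2)

/-- The position (in `{1,…,n}`) of the value `v` in `π`. -/
def idx (n : ℕ) (π : Equiv.Perm (ZMod n)) (v : ZMod n) : ℕ := repr1 n (π.symm v)

/-- Word coordinate of the occurrence of the pointer `(p,p+1)` as the right pointer of the
entry `p`:  the entry at position `i` is given word coordinate `3*i - 1`, its left pointer
coordinate `3*i - 2` and its right pointer coordinate `3*i`. -/
def posR (n : ℕ) (π : Equiv.Perm (ZMod n)) (p : ZMod n) : ℕ := 3 * idx n π p

/-- Word coordinate of the occurrence of the pointer `(p,p+1)` as the left pointer of the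
entry `p+1`. -/
def posL (n : ℕ) (π : Equiv.Perm (ZMod n)) (p : ZMod n) : ℕ := 3 * idx n π (p + 1) - 2

/-- Two pairs of positions interleave (pattern `a b a b` or `b a b a`). -/
def Interleaved (a1 a2 b1 b2 : ℕ) : Prop :=
  (min a1 a2 < min b1 b2 ∧ min b1 b2 < max a1 a2 ∧ max a1 a2 < max b1 b2) ∨
  (min b1 b2 < min a1 a2 ∧ min a1 a2 < max b1 b2 ∧ max b1 b2 < max a1 a2)

/-- `(p, q)` is a valid pointer context for `π`: the two pointers are distinct and their
occurrences in the pointer word of `π` appear in the order `p,q,p,q` or `q,p,q,p`. -/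
def ValidContext (n : ℕ) (π : Equiv.Perm (ZMod n)) (p q : ZMod n) : Prop :=
  p ≠ q ∧ Interleaved (posR n π p) (posL n π p) (posR n π q) (posL n π q)

/-- The number of (unordered) valid pointer contexts of `π`. -/
noncomputable def numContexts (n : ℕ) (π : Equiv.Perm (ZMod n)) : ℕ :=
  {pq : ZMod n × ZMod n | ValidContext n π pq.1 pq.2}.ncard / 2

/-- `ρ ∈ S_{2n−1}` is the contraction of `π ∈ S_{2n}`, obtained by deleting the entry `2n`. -/
def IsContraction (n : ℕ) (ρ : Equiv.Perm (ZMod (2 * n - 1)))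
    (π : Equiv.Perm (ZMod (2 * n))) : Prop :=
  ∃ m : ℕ, 1 ≤ m ∧ m ≤ 2 * n ∧ π (m : ZMod (2 * n)) = ((2 * n : ℕ) : ZMod (2 * n)) ∧
    (∀ k : ℕ, 1 ≤ k → k < m →
      ρ (k : ZMod (2 * n - 1)) =
        ((repr1 (2 * n) (π (k : ZMod (2 * n))) : ℕ) : ZMod (2 * n - 1))) ∧
    (∀ k : ℕ, m ≤ k → k ≤ 2 * n - 1 →
      ρ (k : ZMod (2 * n - 1)) =
        ((repr1 (2 * n) (π ((k + 1 : ℕ) : ZMod (2 * n))) : ℕ) : ZMod (2 * n - 1)))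

/-- `M_{2n}`: the contractions of permutations in `S_{2n}` with maximal strategic pile. -/
def MsetAll (n : ℕ) : Set (Equiv.Perm (ZMod (2 * n - 1))) :=
  {ρ | ∃ π : Equiv.Perm (ZMod (2 * n)), MaxPile (2 * n) π ∧ IsContraction n ρ π}

/-- `M_{2n,k}`: the contractions of permutations in `S_{2n}` with maximal strategic pile
and exactly `k` valid pointer contexts. -/
def Mset (n k : ℕ) : Set (Equiv.Perm (ZMod (2 * n - 1))) :=
  {ρ | ρ ∈ MsetAll n ∧ numContexts (2 * n - 1) ρ = k}

/-- Cyclic shift by `a`: `C_a(π)(x) = π(x - a)`. -/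
def Cshift (n : ℕ) (a : ZMod n) (π : Equiv.Perm (ZMod n)) : Equiv.Perm (ZMod n) :=
  (Equiv.subRight a).trans π

/-- Translation by `b`: `T_b(π)(x) = π(x) + b`. -/
def Tshift (n : ℕ) (b : ZMod n) (π : Equiv.Perm (ZMod n)) : Equiv.Perm (ZMod n) :=
  π.trans (Equiv.addRight b)

/-- `φ(a,b,π) = C_a(T_b(π))`, i.e. `x ↦ π(x-a) + b`. -/
def phiAct (n : ℕ) (a b : ZMod n) (π : Equiv.Perm (ZMod n)) : Equiv.Perm (ZMod n) :=
  Cshift n a (Tshift n b π)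

/-- The difference sequence of `π`. -/
def Dseq (n : ℕ) (π : Equiv.Perm (ZMod n)) : ZMod n → ZMod n :=
  fun k => π (k + 1) - π k

/-- The difference sequence of `π` is periodic with (least) period `p`, `0 < p < n`. -/
def PeriodicWith (n : ℕ) (π : Equiv.Perm (ZMod n)) (p : ℕ) : Prop :=
  0 < p ∧ p < n ∧ (∀ k : ZMod n, Dseq n π (k + (p : ZMod n)) = Dseq n π k) ∧
    ∀ q : ℕ, 0 < q → q < p → ¬ ∀ k : ZMod n, Dseq n π (k + (q : ZMod n)) = Dseq n π k

/-!
Periodicity of the difference sequence with period `p` says exactly that the `p`-step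
difference `π (k + p) - π k` is a constant `c`. Walking `n / p` steps of length `p` returns to
the start, so `(n / p) • c = 0` in `ZMod n`, which forces `p ∣ c`; hence `π (i + p) ≡ π i`
modulo `p`.
-/

open Function

theorem ZMod.apply_eq_apply_zero_of_periodic_one {n : ℕ} {α : Type*} {g : ZMod n → α} (hg : Periodic g 1)
    (k : ZMod n) : g k = g 0 := by
  obtain ⟨m, rfl⟩ := ZMod.intCast_surjective k
  simpa using hg.int_mul_eq m

theorem add_eq_add_sub_of_dseq_periodic {n : ℕ} (π : Equiv.Perm (ZMod n)) (a : ZMod n)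
    (hper : ∀ k : ZMod n, Dseq n π (k + a) = Dseq n π k) (k : ZMod n) :
    π (k + a) = π k + (π a - π 0) := by
  have hconst : Periodic (fun j => π (j + a) - π j) 1 := fun j => by
    have h := hper j
    simp only [Dseq] at h
    show π (j + 1 + a) - π (j + 1) = π (j + a) - π j
    rw [add_right_comm]
    linear_combination h
  have hk := ZMod.apply_eq_apply_zero_of_periodic_one hconst k
  simp only [zero_add] at hk
  linear_combination hk

theorem apply_nsmul_eq_of_apply_add_eq {M A : Type*} [AddMonoid M] [AddMonoid A] {f : M → A}
    {a : M} {c : A} (h : ∀ k, f (k + a) = f k + c) (m : ℕ) : f (m • a) = f 0 + m • c := by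
  induction m with
  | zero => simp
  | succ m ih => rw [succ_nsmul, h, ih, succ_nsmul, add_assoc]

theorem ZMod.castHom_eq_zero_of_div_nsmul_eq_zero {n p : ℕ} [NeZero n] (hdvd : p ∣ n)
    {c : ZMod n} (hc : (n / p) • c = 0) : ZMod.castHom hdvd (ZMod p) c = 0 := by
  have hn : 0 < n := Nat.pos_of_neZero n
  have hquot : 0 < n / p := Nat.div_pos (Nat.le_of_dvd hn hdvd) (Nat.pos_of_dvd_of_pos hdvd hn)
  rw [← ZMod.natCast_zmod_val c, nsmul_eq_mul, ← Nat.cast_mul,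
    ZMod.natCast_eq_zero_iff] at hc
  rw [← ZMod.natCast_zmod_val c, map_natCast, ZMod.natCast_eq_zero_iff]
  refine Nat.dvd_of_mul_dvd_mul_left hquot ?_
  rwa [Nat.div_mul_cancel hdvd]

theorem natCast_repr1 {n p : ℕ} [NeZero n] (hdvd : p ∣ n) (x : ZMod n) :
    ((repr1 n x : ℕ) : ZMod p) = ZMod.castHom hdvd (ZMod p) x := by
  unfold repr1
  split_ifs with hx
  · rw [hx, map_zero, ZMod.natCast_eq_zero_iff]
    exact hdvd
  · rw [ZMod.castHom_apply, ZMod.natCast_val]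

theorem stmt8_general (n p : ℕ) (hn : 0 < n) (hdvd : p ∣ n)
    (π : Equiv.Perm (ZMod n))
    (hper : ∀ k : ZMod n, Dseq n π (k + (p : ZMod n)) = Dseq n π k) :
    ∀ i : ZMod n,
      ((repr1 n (π i) : ℕ) : ZMod p) = ((repr1 n (π (i + (p : ZMod n))) : ℕ) : ZMod p) := by
  have : NeZero n := ⟨hn.ne'⟩
  set c := π p - π 0
  have hstep : ∀ k, π (k + p) = π k + c := add_eq_add_sub_of_dseq_periodic π p hper
  have hc : (n / p) • c = 0 := by
    have hloop := apply_nsmul_eq_of_apply_add_eq hstep (n / p)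
    rwa [nsmul_eq_mul, ← Nat.cast_mul, Nat.div_mul_cancel hdvd, ZMod.natCast_self,
      left_eq_add] at hloop
  intro i
  rw [natCast_repr1 hdvd, natCast_repr1 hdvd, hstep, map_add,
    ZMod.castHom_eq_zero_of_div_nsmul_eq_zero hdvd hc, add_zero]

/-- Let `π ∈ S_n`, let `p ∣ n`, and suppose the difference sequence of `π`
is periodic with a period dividing `p`.  Then `π(i) ≡ π(i+p) (mod p)` for all `i`. -/
theorem stmt8 (n p : ℕ) (hn : 0 < n) (hp : 0 < p) (hdvd : p ∣ n)
    (π : Equiv.Perm (ZMod n))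
    (hper : ∀ k : ZMod n, Dseq n π (k + (p : ZMod n)) = Dseq n π k) :
    ∀ i : ZMod n,
      ((repr1 n (π i) : ℕ) : ZMod p) = ((repr1 n (π (i + (p : ZMod n))) : ℕ) : ZMod p) :=
  stmt8_general n p hn hdvd π hper
end

section
/- Let π ∈ S_{2n−1} have constant difference sequence with difference value d, where gcd(2n−1, d) = 1, and let e ∈ {1,…,2n−2} be the multiplicative inverse of d modulo 2n−1. Then, counting pointers cyclically (pointers are the pairs (p, p+1) with p ∈ Z_{2n−1}, each entry having left pointer (π(i)−1, π(i)) and right pointer (π(i), π(i)+1) modulo 2n−1), the number of valid pointer contexts of π is (2n−1)·min(e − 1, 2n−1−e). -/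
section Repr1

variable {N : ℕ} [NeZero N]

lemma one_le_repr1 (x : ZMod N) : 1 ≤ repr1 N x := by
  unfold repr1
  split_ifs with h
  · exact Nat.one_le_iff_ne_zero.mpr (NeZero.ne N)
  · exact Nat.one_le_iff_ne_zero.mpr ((ZMod.val_ne_zero x).mpr h)

lemma repr1_le (x : ZMod N) : repr1 N x ≤ N := by
  unfold repr1
  split_ifs
  · rfl
  · exact (ZMod.val_lt x).le

@[simp]
lemma natCast_repr1_s13 (x : ZMod N) : ((repr1 N x : ℕ) : ZMod N) = x := by
  unfold repr1
  split_ifs with h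
  · simp [h]
  · simp

lemma repr1_natCast {m : ℕ} (h1 : 1 ≤ m) (h2 : m ≤ N) : repr1 N (m : ZMod N) = m := by
  unfold repr1
  split_ifs with h
  · have := Nat.le_of_dvd (by omega) ((ZMod.natCast_eq_zero_iff m N).mp h)
    omega
  · have hm : m ≠ N := by rintro rfl; exact h (ZMod.natCast_self m)
    rw [ZMod.val_natCast, Nat.mod_eq_of_lt (by omega)]

lemma repr1_injective : Function.Injective (repr1 N) := fun x y h => by
  rw [← natCast_repr1_s13 x, ← natCast_repr1_s13 y, h]

lemma repr1_add_natCast {e : ℕ} (he : e < N) (x : ZMod N) :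
    repr1 N (x + e) =
      if repr1 N x + e ≤ N then repr1 N x + e else repr1 N x + e - N := by
  have h1 := one_le_repr1 x
  have h2 := repr1_le x
  split_ifs with h
  · rw [← repr1_natCast (m := repr1 N x + e) (by omega) h]
    simp
  · rw [← repr1_natCast (N := N) (m := repr1 N x + e - N) (by omega) (by omega),
      Nat.cast_sub (by omega)]
    simp

lemma val_sub_eq_repr1 (x y : ZMod N) :
    (y - x).val =
      if repr1 N x ≤ repr1 N y then repr1 N y - repr1 N x else repr1 N y + N - repr1 N x := by
  have := one_le_repr1 x
  have := one_le_repr1 y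
  have := repr1_le x
  have := repr1_le y
  have hcast (m : ℕ) (hm : (m : ZMod N) = y - x) (hlt : m < N) : (y - x).val = m := by
    rw [← hm, ZMod.val_natCast, Nat.mod_eq_of_lt hlt]
  split_ifs with h
  · exact hcast _ (by rw [Nat.cast_sub h]; simp) (by omega)
  · exact hcast _ (by rw [Nat.cast_sub (by omega)]; simp) (by omega)

end Repr1

/-- The offsets `b - a` between the positions of two pointers for which their occurrences
interleave, when each pointer occurs at the positions `a` and `a + e` of entries. -/
def crossingOffsets (N : ℕ) [NeZero N] (e : ℕ) : Finset (ZMod N) :=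
  Finset.univ.filter fun u => u ≠ 0 ∧ (u.val < e ↔ u.val ≤ N - e)

section Counting

variable {N : ℕ} [NeZero N]

lemma interleaved_iff_val_sub_mem {e : ℕ} (he : e < N) {x y : ZMod N} (hxy : x ≠ y) :
    Interleaved (3 * repr1 N x) (3 * repr1 N (x + e) - 2)
        (3 * repr1 N y) (3 * repr1 N (y + e) - 2) ↔
      y - x ∈ crossingOffsets N e := by
  have := one_le_repr1 x
  have := one_le_repr1 y
  have := repr1_le x
  have := repr1_le y
  have hne : repr1 N x ≠ repr1 N y := repr1_injective.ne hxy
  simp only [crossingOffsets, Finset.mem_filter, Finset.mem_univ, true_and,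
    sub_ne_zero.mpr hxy.symm, ne_eq, not_false_eq_true]
  rw [repr1_add_natCast he, repr1_add_natCast he, val_sub_eq_repr1]
  unfold Interleaved
  split_ifs <;> omega

theorem validContext_iff_of_symm_add_one {e : ℕ} (he : e < N) {π : Equiv.Perm (ZMod N)}
    (hstep : ∀ p, π.symm (p + 1) = π.symm p + e) (p q : ZMod N) :
    ValidContext N π p q ↔ π.symm q - π.symm p ∈ crossingOffsets N e := by
  unfold ValidContext posR posL idx
  rw [hstep, hstep]
  by_cases hpq : p = q
  · subst hpq
    simp [crossingOffsets]
  · rw [interleaved_iff_val_sub_mem he (π.symm.injective.ne hpq)]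
    exact and_iff_right hpq

lemma card_filter_sub_mem {α G : Type*} [Fintype α] [AddGroup G] [Fintype G] [DecidableEq G]
    (σ : α ≃ G) (S : Finset G) :
    (Finset.univ.filter fun pq : α × α => σ pq.2 - σ pq.1 ∈ S).card = Fintype.card G * S.card := by
  rw [← Finset.card_univ, ← Finset.card_product]
  refine Finset.card_nbij' (fun pq => (σ pq.1, σ pq.2 - σ pq.1))
    (fun av => (σ.symm av.1, σ.symm (av.2 + av.1))) ?_ ?_ ?_ ?_ <;>
    intro x hx <;> simp_all

lemma card_crossingOffsets {e : ℕ} (he1 : 1 ≤ e) (he : e < N) :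
    (crossingOffsets N e).card = 2 * min (e - 1) (N - e) := by
  have hval : (crossingOffsets N e).map ⟨ZMod.val, ZMod.val_injective N⟩ =
      Finset.Icc 1 (min (e - 1) (N - e)) ∪ Finset.Icc (max e (N - e + 1)) (N - 1) := by
    ext u
    simp only [crossingOffsets, Finset.mem_map, Finset.mem_filter, Finset.mem_univ, true_and,
      Function.Embedding.coeFn_mk, Finset.mem_union, Finset.mem_Icc]
    constructor
    · rintro ⟨v, ⟨hv0, hv⟩, rfl⟩
      have := ZMod.val_lt v
      have := (ZMod.val_ne_zero v).mpr hv0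
      omega
    · intro hu
      refine ⟨u, ?_, ZMod.val_cast_of_lt (by omega)⟩
      rw [ZMod.val_cast_of_lt (by omega), ne_eq, ZMod.natCast_eq_zero_iff]
      exact ⟨fun h => by have := Nat.le_of_dvd (by omega) h; omega, by omega⟩
  rw [← Finset.card_map, hval, Finset.card_union_of_disjoint, Nat.card_Icc, Nat.card_Icc]
  · omega
  · exact Finset.disjoint_left.mpr fun u h1 h2 => by
      simp only [Finset.mem_Icc] at h1 h2
      omega

theorem numContexts_of_symm_add_one {e : ℕ} (he1 : 1 ≤ e) (he : e < N)
    {π : Equiv.Perm (ZMod N)} (hstep : ∀ p, π.symm (p + 1) = π.symm p + e) :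
    numContexts N π = N * min (e - 1) (N - e) := by
  have hset : {pq : ZMod N × ZMod N | ValidContext N π pq.1 pq.2} =
      ↑(Finset.univ.filter fun pq : ZMod N × ZMod N =>
        π.symm pq.2 - π.symm pq.1 ∈ crossingOffsets N e) := by
    ext pq
    simp [validContext_iff_of_symm_add_one he hstep]
  rw [numContexts, hset, Set.ncard_coe_finset, card_filter_sub_mem, ZMod.card,
    card_crossingOffsets he1 he, Nat.mul_left_comm, Nat.mul_div_cancel_left _ two_pos]

end Counting

lemma apply_add_natCast_of_dseq_eq {N : ℕ} {π : Equiv.Perm (ZMod N)} {d : ZMod N}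
    (hconst : ∀ k, Dseq N π k = d) (x : ZMod N) (m : ℕ) : π (x + m) = π x + m * d := by
  induction m with
  | zero => simp
  | succ m ih =>
    have h := hconst (x + m)
    rw [Dseq, sub_eq_iff_eq_add'] at h
    push_cast
    rw [← add_assoc, h, ih]
    ring

lemma symm_add_one_of_dseq_eq {N : ℕ} {π : Equiv.Perm (ZMod N)} {d : ZMod N}
    (hconst : ∀ k, Dseq N π k = d) {e : ℕ} (hinv : (e : ZMod N) * d = 1) (p : ZMod N) :
    π.symm (p + 1) = π.symm p + e := by
  rw [Equiv.symm_apply_eq, apply_add_natCast_of_dseq_eq hconst, hinv, Equiv.apply_symm_apply]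

theorem stmt13_general (n : ℕ) (π : Equiv.Perm (ZMod (2 * n - 1)))
    (d : ZMod (2 * n - 1)) (hconst : ∀ k : ZMod (2 * n - 1), Dseq (2 * n - 1) π k = d)
    (e : ℕ) (he1 : 1 ≤ e) (he2 : e ≤ 2 * n - 2)
    (hinv : (e : ZMod (2 * n - 1)) * d = 1) :
    numContexts (2 * n - 1) π = (2 * n - 1) * min (e - 1) (2 * n - 1 - e) := by
  have : NeZero (2 * n - 1) := ⟨by omega⟩
  exact numContexts_of_symm_add_one he1 (by omega) (symm_add_one_of_dseq_eq hconst hinv)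

/-- Let `π ∈ S_{2n-1}` have constant difference sequence with value `d`,
`gcd(2n-1, d) = 1`, and let `e ∈ {1,…,2n-2}` be the multiplicative inverse of `d`
modulo `2n-1`.  Then the number of valid pointer contexts of `π` is
`(2n-1)·min(e-1, 2n-1-e)`. -/
theorem stmt13 (n : ℕ) (hn : 0 < n) (π : Equiv.Perm (ZMod (2 * n - 1)))
    (d : ZMod (2 * n - 1)) (hconst : ∀ k : ZMod (2 * n - 1), Dseq (2 * n - 1) π k = d)
    (hgcd : Nat.gcd (2 * n - 1) d.val = 1)
    (e : ℕ) (he1 : 1 ≤ e) (he2 : e ≤ 2 * n - 2)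
    (hinv : (e : ZMod (2 * n - 1)) * d = 1) :
    numContexts (2 * n - 1) π = (2 * n - 1) * min (e - 1) (2 * n - 1 - e) :=
  stmt13_general n π d hconst e he1 he2 hinv
end
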